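/- arXiv:2306.05875 — 10 statements merged into one kernel-verified Lean document; each statement's English description precedes it below -/
import Mathlib

section
/- If σ_A² ≤ σ_B², then for every ω ∈ [0,1) one has P_A ⪯ P_SCI(ω), i.e. P_SCI(ω) − P_A is positive semidefinite. (Consequently, no SCI filter can improve the estimator of agent A when agent B's variance in the measurement direction is at least that of A.) -/
/-!
`P_SCI(ω) - P_A = ω/(1-ω) • (P_A - D(ω)⁻¹ • (P_A u)(P_A u)ᵀ)`, and `D(ω) ≥ σ_A²` once
`σ_A² ≤ σ_B²`. The bracket is then positive semidefinite by the Cauchy–Schwarz inequality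
`(xᵀ P_A u)² ≤ (xᵀ P_A x)(uᵀ P_A u)` for the semi-inner product defined by `P_A`.
-/

open Matrix

theorem Matrix.PosSemidef.dotProduct_mulVec_sq_le {n : Type*} [Fintype n] {P : Matrix n n ℝ}
    (hP : P.PosSemidef) (x y : n → ℝ) :
    (x ⬝ᵥ (P *ᵥ y)) ^ 2 ≤ (x ⬝ᵥ (P *ᵥ x)) * (y ⬝ᵥ (P *ᵥ y)) := by
  let := P.toSeminormedAddCommGroup hP
  let := P.toInnerProductSpace hP
  have hinner (a b : n → ℝ) : inner ℝ a b = a ⬝ᵥ (P *ᵥ b) := by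
    change (P *ᵥ b) ⬝ᵥ star a = _
    simp [dotProduct_comm]
  simpa only [sq, hinner] using real_inner_mul_inner_self_le x y

theorem Matrix.PosSemidef.sub_inv_smul_vecMulVec_mulVec {n : Type*} [Fintype n]
    {P : Matrix n n ℝ} (hP : P.PosSemidef) (u : n → ℝ) {c : ℝ} (hc : u ⬝ᵥ (P *ᵥ u) ≤ c) :
    (P - c⁻¹ • vecMulVec (P *ᵥ u) (P *ᵥ u)).PosSemidef := by
  have hV : (vecMulVec (P *ᵥ u) (P *ᵥ u)).IsHermitian := by
    simpa using (posSemidef_vecMulVec_self_star (P *ᵥ u)).isHermitian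
  refine .of_dotProduct_mulVec_nonneg (hP.isHermitian.sub (hV.smul (.all _))) fun x => ?_
  simp only [star_trivial, sub_mulVec, smul_mulVec, vecMulVec_mulVec, op_smul_eq_smul,
    dotProduct_sub, dotProduct_smul, smul_eq_mul, dotProduct_comm (P *ᵥ u) x, sub_nonneg]
  have hq : 0 ≤ x ⬝ᵥ (P *ᵥ x) := by simpa using hP.dotProduct_mulVec_nonneg x
  rcases le_or_gt c 0 with hc0 | hc0
  · exact (mul_nonpos_of_nonpos_of_nonneg (inv_nonpos.2 hc0) (mul_self_nonneg _)).trans hq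
  · rw [inv_mul_le_iff₀ hc0]
    nlinarith [hP.dotProduct_mulVec_sq_le x u]

theorem one_div_one_sub_smul_sub_sub_eq {K M : Type*} [Field K] [AddCommGroup M] [Module K M]
    {t : K} (ht : t ≠ 1) (d : K) (A V : M) :
    (1 / (1 - t)) • (A - (t / d) • V) - A = (t / (1 - t)) • (A - d⁻¹ • V) := by
  have : 1 - t ≠ 0 := sub_ne_zero.2 ht.symm
  match_scalars
  · field_simp
    ring
  · field_simp

theorem stmt_0_general {n : ℕ}
    (PA : Matrix (Fin n) (Fin n) ℝ)
    (hPA : PA.PosDef)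
    (u : Fin n → ℝ)
    (σm2 : ℝ) (hσm : 0 ≤ σm2)
    (σA2 σB2 : ℝ) (hσA : σA2 = u ⬝ᵥ (PA *ᵥ u))
    (D : ℝ → ℝ) (hD : ∀ ω, D ω = ω * σA2 + (1 - ω) * (σB2 + ω * σm2))
    (PSCI : ℝ → Matrix (Fin n) (Fin n) ℝ)
    (hPSCI : ∀ ω, PSCI ω =
      (1 / (1 - ω)) • (PA - (ω / D ω) • vecMulVec (PA *ᵥ u) (PA *ᵥ u)))
    (hAB : σA2 ≤ σB2) :
    ∀ ω ∈ Set.Ico (0 : ℝ) 1, (PSCI ω - PA).PosSemidef := by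
  rintro ω ⟨hω0, hω1⟩
  have hσA_le_D : u ⬝ᵥ (PA *ᵥ u) ≤ D ω := by
    rw [← hσA, hD]
    linarith [mul_nonneg (mul_nonneg (sub_nonneg.2 hω1.le) hω0) hσm,
      mul_nonneg (sub_nonneg.2 hω1.le) (sub_nonneg.2 hAB)]
  rw [hPSCI, one_div_one_sub_smul_sub_sub_eq hω1.ne]
  exact (hPA.posSemidef.sub_inv_smul_vecMulVec_mulVec u hσA_le_D).smul
    (div_nonneg hω0 (sub_nonneg.2 hω1.le))

/-- If `σ_A² ≤ σ_B²`, then for every `ω ∈ [0,1)` one has `P_A ⪯ P_SCI(ω)`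
(Loewner order), hence no SCI filter can improve the estimator of agent `A`. -/
theorem stmt_0 {n : ℕ} (hn : 1 ≤ n)
    (PA PB : Matrix (Fin n) (Fin n) ℝ)
    (hPA : PA.PosDef) (hPAs : PA.IsSymm) (hPB : PB.PosDef) (hPBs : PB.IsSymm)
    (u : Fin n → ℝ) (hu : u ⬝ᵥ u = 1)
    (σm2 : ℝ) (hσm : 0 ≤ σm2)
    (σA2 σB2 : ℝ) (hσA : σA2 = u ⬝ᵥ (PA *ᵥ u)) (hσB : σB2 = u ⬝ᵥ (PB *ᵥ u))
    (D : ℝ → ℝ) (hD : ∀ ω, D ω = ω * σA2 + (1 - ω) * (σB2 + ω * σm2))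
    (PSCI : ℝ → Matrix (Fin n) (Fin n) ℝ)
    (hPSCI : ∀ ω, PSCI ω =
      (1 / (1 - ω)) • (PA - (ω / D ω) • vecMulVec (PA *ᵥ u) (PA *ᵥ u)))
    (hAB : σA2 ≤ σB2) :
    ∀ ω ∈ Set.Ico (0 : ℝ) 1, (PSCI ω - PA).PosSemidef :=
  stmt_0_general PA hPA u σm2 hσm σA2 σB2 hσA D hD PSCI hPSCI hAB
end

section
/- Let J be a real-valued function on n×n matrices that is monotone with respect to the Loewner order (M ⪯ N implies J(M) ≤ J(N)). If σ_A² ≤ σ_B², then for every ω ∈ [0,1) one has J(P_SCI(ω)) ≥ J(P_A); in particular there is no ω ∈ [0,1) with J(P_SCI(ω)) < J(P_A) (no pertinent SCI filter for agent A exists). -/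
open Matrix

/-!
Writing `v = P_A u`, one has `P_SCI(ω) - P_A = (1/(1-ω)) (ω P_A - (ω/D) v vᵀ)`. The Cauchy–Schwarz
inequality for the semi-inner product `xᵀ P_A y` says `v vᵀ ⪯ σ_A² P_A`, so this difference is
positive semidefinite as soon as `σ_A² ≤ D(ω)`, and
`D(ω) - σ_A² = (1-ω) (σ_B² - σ_A² + ω σ_m²) ≥ 0`. Monotonicity of `J` concludes.
-/

namespace Matrix

variable {n : Type*} [Fintype n] {P : Matrix n n ℝ}

noncomputable def sciCovariance (P : Matrix n n ℝ) (u : n → ℝ) (ω D : ℝ) : Matrix n n ℝ :=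
  (1 / (1 - ω)) • (P - (ω / D) • vecMulVec (P *ᵥ u) (P *ᵥ u))

namespace PosSemidef

theorem dotProduct_mulVec_sq_le_s1 (hP : P.PosSemidef) (x y : n → ℝ) :
    (x ⬝ᵥ (P *ᵥ y)) ^ 2 ≤ (x ⬝ᵥ (P *ᵥ x)) * (y ⬝ᵥ (P *ᵥ y)) := by
  let := P.toSeminormedAddCommGroup hP
  let := P.toInnerProductSpace hP
  have hinner (a b : n → ℝ) : inner ℝ a b = a ⬝ᵥ (P *ᵥ b) := by
    change (P *ᵥ b) ⬝ᵥ star a = _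
    rw [star_trivial, dotProduct_comm]
  simpa only [hinner, sq] using real_inner_mul_inner_self_le x y

theorem smul_sub_vecMulVec_mulVec (hP : P.PosSemidef) (u : n → ℝ) :
    ((u ⬝ᵥ (P *ᵥ u)) • P - vecMulVec (P *ᵥ u) (P *ᵥ u)).PosSemidef := by
  have hvv : (vecMulVec (P *ᵥ u) (P *ᵥ u)).IsHermitian := by
    simpa using (posSemidef_vecMulVec_self_star (P *ᵥ u)).isHermitian
  refine .of_dotProduct_mulVec_nonneg
    ((hP.isHermitian.smul (IsSelfAdjoint.all _)).sub hvv) fun x => ?_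
  have hquad : x ⬝ᵥ (vecMulVec (P *ᵥ u) (P *ᵥ u) *ᵥ x) = (x ⬝ᵥ (P *ᵥ u)) ^ 2 := by
    rw [vecMulVec_mulVec, dotProduct_smul, op_smul_eq_mul, dotProduct_comm, sq]
  rw [star_trivial, sub_mulVec, dotProduct_sub, smul_mulVec, dotProduct_smul, smul_eq_mul, hquad,
    sub_nonneg, mul_comm]
  exact hP.dotProduct_mulVec_sq_le_s1 x u

theorem smul_sub_smul_vecMulVec_mulVec (hP : P.PosSemidef) (u : n → ℝ) {a c : ℝ} (hc : 0 ≤ c)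
    (hca : c * (u ⬝ᵥ (P *ᵥ u)) ≤ a) :
    (a • P - c • vecMulVec (P *ᵥ u) (P *ᵥ u)).PosSemidef := by
  have h := ((hP.smul_sub_vecMulVec_mulVec u).smul hc).add (hP.smul (sub_nonneg.2 hca))
  convert h using 1
  module

theorem posSemidef_sciCovariance_sub (hP : P.PosSemidef) (u : n → ℝ) {ω D : ℝ}
    (hω : ω ∈ Set.Ico 0 1) (hD : u ⬝ᵥ (P *ᵥ u) ≤ D) : (sciCovariance P u ω D - P).PosSemidef := by
  have hσ : 0 ≤ u ⬝ᵥ (P *ᵥ u) := by simpa using hP.dotProduct_mulVec_nonneg u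
  have h1ω : 0 < 1 - ω := sub_pos.2 hω.2
  have hc : ω / D * (u ⬝ᵥ (P *ᵥ u)) ≤ ω := by
    rw [div_mul_eq_mul_div, mul_div_assoc]
    exact mul_le_of_le_one_right hω.1 (div_le_one_of_le₀ hD (hσ.trans hD))
  have hsub : sciCovariance P u ω D - P
      = (1 / (1 - ω)) • (ω • P - (ω / D) • vecMulVec (P *ᵥ u) (P *ᵥ u)) := by
    ext i j
    simp only [sciCovariance, sub_apply, smul_apply, smul_eq_mul]
    field_simp
    ring
  rw [hsub]
  exact (hP.smul_sub_smul_vecMulVec_mulVec u (div_nonneg hω.1 (hσ.trans hD)) hc).smul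
    (by positivity)

end PosSemidef

end Matrix

theorem stmt_1_general {n : ℕ}
    (PA : Matrix (Fin n) (Fin n) ℝ)
    (hPA : PA.PosDef)
    (u : Fin n → ℝ)
    (σm2 : ℝ)
    (σA2 σB2 : ℝ) (hσA : σA2 = u ⬝ᵥ (PA *ᵥ u))
    (D : ℝ → ℝ) (hD : ∀ ω, D ω = ω * σA2 + (1 - ω) * (σB2 + ω * σm2))
    (PSCI : ℝ → Matrix (Fin n) (Fin n) ℝ)
    (hPSCI : ∀ ω, PSCI ω =
      (1 / (1 - ω)) • (PA - (ω / D ω) • vecMulVec (PA *ᵥ u) (PA *ᵥ u)))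
    (hσm : 0 ≤ σm2)
    (J : Matrix (Fin n) (Fin n) ℝ → ℝ)
    (hJ : ∀ M N : Matrix (Fin n) (Fin n) ℝ, (N - M).PosSemidef → J M ≤ J N)
    (hAB : σA2 ≤ σB2) :
    (∀ ω ∈ Set.Ico (0 : ℝ) 1, J PA ≤ J (PSCI ω)) ∧
      ¬ ∃ ω ∈ Set.Ico (0 : ℝ) 1, J (PSCI ω) < J PA := by
  have hJ_le (ω : ℝ) (hω : ω ∈ Set.Ico 0 1) : J PA ≤ J (PSCI ω) := by
    have hσD : σA2 ≤ D ω := by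
      have h1ω : 0 ≤ 1 - ω := sub_nonneg.2 hω.2.le
      rw [hD]
      linarith [mul_nonneg h1ω (sub_nonneg.2 hAB), mul_nonneg (mul_nonneg h1ω hω.1) hσm]
    refine hJ _ _ ?_
    rw [hPSCI]
    exact hPA.posSemidef.posSemidef_sciCovariance_sub u hω (hσA ▸ hσD)
  exact ⟨hJ_le, fun ⟨ω, hω, hlt⟩ => (hJ_le ω hω).not_gt hlt⟩

/-- If `J` is monotone w.r.t. the Loewner order and `σ_A² ≤ σ_B²`, then
`J (P_SCI ω) ≥ J P_A` for all `ω ∈ [0,1)`; in particular no pertinent SCI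
filter for agent `A` exists. -/
theorem stmt_1 {n : ℕ} (hn : 1 ≤ n)
    (PA PB : Matrix (Fin n) (Fin n) ℝ)
    (hPA : PA.PosDef) (hPAs : PA.IsSymm) (hPB : PB.PosDef) (hPBs : PB.IsSymm)
    (u : Fin n → ℝ) (hu : u ⬝ᵥ u = 1)
    (σm2 : ℝ)
    (σA2 σB2 : ℝ) (hσA : σA2 = u ⬝ᵥ (PA *ᵥ u)) (hσB : σB2 = u ⬝ᵥ (PB *ᵥ u))
    (D : ℝ → ℝ) (hD : ∀ ω, D ω = ω * σA2 + (1 - ω) * (σB2 + ω * σm2))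
    (PSCI : ℝ → Matrix (Fin n) (Fin n) ℝ)
    (hPSCI : ∀ ω, PSCI ω =
      (1 / (1 - ω)) • (PA - (ω / D ω) • vecMulVec (PA *ᵥ u) (PA *ᵥ u)))
    (hσm : 0 ≤ σm2)
    (J : Matrix (Fin n) (Fin n) ℝ → ℝ)
    (hJ : ∀ M N : Matrix (Fin n) (Fin n) ℝ, (N - M).PosSemidef → J M ≤ J N)
    (hAB : σA2 ≤ σB2) :
    (∀ ω ∈ Set.Ico (0 : ℝ) 1, J PA ≤ J (PSCI ω)) ∧
      ¬ ∃ ω ∈ Set.Ico (0 : ℝ) 1, J (PSCI ω) < J PA :=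
  stmt_1_general PA hPA u σm2 σA2 σB2 hσA D hD PSCI hPSCI hσm J hJ hAB
end

section
/- Let J be a real-valued function on n×n matrices that is monotone with respect to the Loewner order (M ⪯ N implies J(M) ≤ J(N)). If there exists ω ∈ [0,1) with J(P_SCI^A(ω)) < J(P_A) (a pertinent SCI filter for agent A), then there is no ω′ ∈ [0,1) with J(P_SCI^B(ω′)) < J(P_B); i.e., at most one of the two agents can benefit from the distance measurement. -/
/-!
For any positive semidefinite `P`, direction `u` and `D ≥ uᵀ P u`, the SCI covariance satisfies
`P_SCI(ω) - P = ω / (1 - ω) • (P - (P u)(P u)ᵀ / D)`, which is positive semidefinite by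
Cauchy–Schwarz for the form `P`. Hence a monotone cost can only drop when `D < uᵀ P u`.
Since `D_A(ω) - σ_A² = (1 - ω) (σ_B² + ω σ_m² - σ_A²)`, a pertinent filter for `A` forces
`σ_A² > σ_B² + ω σ_m² ≥ σ_B²`, and then `D_B(ω') - σ_B² = (1 - ω') (σ_A² + ω' σ_m² - σ_B²) ≥ 0`
for every `ω' ∈ [0, 1)`.
-/

open Matrix

namespace Matrix

variable {ι : Type*} [Fintype ι] {P : Matrix ι ι ℝ}

lemma PosSemidef.dotProduct_mulVec_comm (hP : P.PosSemidef) (x y : ι → ℝ) :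
    y ⬝ᵥ (P *ᵥ x) = x ⬝ᵥ (P *ᵥ y) := by
  have hPt : Pᵀ = P := by simpa using hP.isHermitian.eq
  rw [dotProduct_mulVec, ← mulVec_transpose, hPt, dotProduct_comm]

lemma PosSemidef.dotProduct_mulVec_sq_le_s2 (hP : P.PosSemidef) (x y : ι → ℝ) :
    (x ⬝ᵥ (P *ᵥ y)) ^ 2 ≤ (x ⬝ᵥ (P *ᵥ x)) * (y ⬝ᵥ (P *ᵥ y)) := by
  have hquad : ∀ t : ℝ,
      0 ≤ (y ⬝ᵥ (P *ᵥ y)) * (t * t) + 2 * (x ⬝ᵥ (P *ᵥ y)) * t + x ⬝ᵥ (P *ᵥ x) := by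
    intro t
    have h := hP.dotProduct_mulVec_nonneg (x + t • y)
    simp only [star_trivial, mulVec_add, mulVec_smul, dotProduct_add, add_dotProduct,
      dotProduct_smul, smul_dotProduct, smul_eq_mul, hP.dotProduct_mulVec_comm x y] at h
    linarith
  have hdiscrim := discrim_le_zero hquad
  rw [discrim] at hdiscrim
  nlinarith

lemma PosSemidef.sub_inv_smul_vecMulVec {u : ι → ℝ} {D : ℝ} (hP : P.PosSemidef)
    (hD : u ⬝ᵥ (P *ᵥ u) ≤ D) :
    (P - D⁻¹ • vecMulVec (P *ᵥ u) (P *ᵥ u)).PosSemidef := by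
  have hσ : 0 ≤ u ⬝ᵥ (P *ᵥ u) := by simpa using hP.dotProduct_mulVec_nonneg u
  rcases (hσ.trans hD).eq_or_lt with rfl | hD0
  · simpa using hP
  refine .of_dotProduct_mulVec_nonneg ?_ fun x => ?_
  · refine hP.isHermitian.sub (IsHermitian.smul ?_ (by simp [IsSelfAdjoint]))
    simpa using (posSemidef_vecMulVec_self_star (P *ᵥ u)).isHermitian
  · have hcs := hP.dotProduct_mulVec_sq_le_s2 x u
    have hx : 0 ≤ x ⬝ᵥ (P *ᵥ x) := by simpa using hP.dotProduct_mulVec_nonneg x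
    simp only [star_trivial, sub_mulVec, smul_mulVec, dotProduct_sub, dotProduct_smul,
      vecMulVec_mulVec, op_smul_eq_mul, smul_eq_mul, dotProduct_comm (P *ᵥ u) x]
    rw [sub_nonneg, inv_mul_le_iff₀ hD0]
    nlinarith

end Matrix

section SCI

variable {ι : Type*} [Fintype ι]

noncomputable def sciCov (P : Matrix ι ι ℝ) (u : ι → ℝ) (D ω : ℝ) : Matrix ι ι ℝ :=
  (1 / (1 - ω)) • (P - (ω / D) • vecMulVec (P *ᵥ u) (P *ᵥ u))

lemma sciCov_sub_self (P : Matrix ι ι ℝ) (u : ι → ℝ) (D : ℝ) {ω : ℝ} (hω : ω ≠ 1) :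
    sciCov P u D ω - P = (ω / (1 - ω)) • (P - D⁻¹ • vecMulVec (P *ᵥ u) (P *ᵥ u)) := by
  have h : 1 - ω ≠ 0 := sub_ne_zero.2 hω.symm
  rw [sciCov]
  match_scalars <;> field_simp
  ring

lemma Matrix.PosSemidef.posSemidef_sciCov_sub_self {P : Matrix ι ι ℝ} (hP : P.PosSemidef)
    {u : ι → ℝ} {D ω : ℝ} (hω₀ : 0 ≤ ω) (hω₁ : ω < 1) (hD : u ⬝ᵥ (P *ᵥ u) ≤ D) :
    (sciCov P u D ω - P).PosSemidef := by
  rw [sciCov_sub_self P u D hω₁.ne]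
  exact (hP.sub_inv_smul_vecMulVec hD).smul (div_nonneg hω₀ (sub_nonneg.2 hω₁.le))

end SCI

theorem stmt_2_general {n : ℕ}
    (PA PB : Matrix (Fin n) (Fin n) ℝ)
    (hPA : PA.PosDef) (hPB : PB.PosDef)
    (u : Fin n → ℝ)
    (σm2 : ℝ) (hσm : 0 ≤ σm2)
    (σA2 σB2 : ℝ) (hσA : σA2 = u ⬝ᵥ (PA *ᵥ u)) (hσB : σB2 = u ⬝ᵥ (PB *ᵥ u))
    (DA DB : ℝ → ℝ)
    (hDA : ∀ ω, DA ω = ω * σA2 + (1 - ω) * (σB2 + ω * σm2))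
    (hDB : ∀ ω, DB ω = ω * σB2 + (1 - ω) * (σA2 + ω * σm2))
    (PSCIA PSCIB : ℝ → Matrix (Fin n) (Fin n) ℝ)
    (hPSCIA : ∀ ω, PSCIA ω =
      (1 / (1 - ω)) • (PA - (ω / DA ω) • vecMulVec (PA *ᵥ u) (PA *ᵥ u)))
    (hPSCIB : ∀ ω, PSCIB ω =
      (1 / (1 - ω)) • (PB - (ω / DB ω) • vecMulVec (PB *ᵥ u) (PB *ᵥ u)))
    (J : Matrix (Fin n) (Fin n) ℝ → ℝ)
    (hJ : ∀ M N : Matrix (Fin n) (Fin n) ℝ, (N - M).PosSemidef → J M ≤ J N)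
    (hA : ∃ ω ∈ Set.Ico (0 : ℝ) 1, J (PSCIA ω) < J PA) :
    ¬ ∃ ω' ∈ Set.Ico (0 : ℝ) 1, J (PSCIB ω') < J PB := by
  obtain ⟨ω, ⟨hω₀, hω₁⟩, hJA⟩ := hA
  have hσAB : σB2 + ω * σm2 < σA2 := by
    by_contra! h
    refine hJA.not_ge (hJ _ _ ?_)
    rw [hPSCIA]
    exact hPA.posSemidef.posSemidef_sciCov_sub_self hω₀ hω₁ (by rw [← hσA, hDA]; nlinarith)
  rintro ⟨ω', ⟨hω'₀, hω'₁⟩, hJB⟩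
  refine hJB.not_ge (hJ _ _ ?_)
  rw [hPSCIB]
  exact hPB.posSemidef.posSemidef_sciCov_sub_self hω'₀ hω'₁
    (by rw [← hσB, hDB]; nlinarith [mul_nonneg hω₀ hσm, mul_nonneg hω'₀ hσm])

/-- At most one of the two agents can benefit from the distance measurement:
if there is a pertinent SCI filter for agent `A` (w.r.t. a Loewner-monotone
cost `J`), then there is none for agent `B`. -/
theorem stmt_2 {n : ℕ} (hn : 1 ≤ n)
    (PA PB : Matrix (Fin n) (Fin n) ℝ)
    (hPA : PA.PosDef) (hPAs : PA.IsSymm) (hPB : PB.PosDef) (hPBs : PB.IsSymm)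
    (u : Fin n → ℝ) (hu : u ⬝ᵥ u = 1)
    (σm2 : ℝ) (hσm : 0 ≤ σm2)
    (σA2 σB2 : ℝ) (hσA : σA2 = u ⬝ᵥ (PA *ᵥ u)) (hσB : σB2 = u ⬝ᵥ (PB *ᵥ u))
    (DA DB : ℝ → ℝ)
    (hDA : ∀ ω, DA ω = ω * σA2 + (1 - ω) * (σB2 + ω * σm2))
    (hDB : ∀ ω, DB ω = ω * σB2 + (1 - ω) * (σA2 + ω * σm2))
    (PSCIA PSCIB : ℝ → Matrix (Fin n) (Fin n) ℝ)
    (hPSCIA : ∀ ω, PSCIA ω =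
      (1 / (1 - ω)) • (PA - (ω / DA ω) • vecMulVec (PA *ᵥ u) (PA *ᵥ u)))
    (hPSCIB : ∀ ω, PSCIB ω =
      (1 / (1 - ω)) • (PB - (ω / DB ω) • vecMulVec (PB *ᵥ u) (PB *ᵥ u)))
    (J : Matrix (Fin n) (Fin n) ℝ → ℝ)
    (hJ : ∀ M N : Matrix (Fin n) (Fin n) ℝ, (N - M).PosSemidef → J M ≤ J N)
    (hA : ∃ ω ∈ Set.Ico (0 : ℝ) 1, J (PSCIA ω) < J PA) :
    ¬ ∃ ω' ∈ Set.Ico (0 : ℝ) 1, J (PSCIB ω') < J PB :=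
  stmt_2_general PA PB hPA hPB u σm2 hσm σA2 σB2 hσA hσB DA DB hDA hDB PSCIA PSCIB hPSCIA hPSCIB J
    hJ hA
end

section
/- Let P be a symmetric positive definite n×n real matrix and u ∈ ℝⁿ with ‖u‖ = 1. Then 0 < ‖P u‖² ≤ (uᵀ P u) · tr(P); equivalently, the ratio r = ‖P u‖² / ((uᵀ P u) · tr(P)) satisfies 0 < r ≤ 1. -/
/-!
Factor `P = Bᵀ B`. Then `P u = Bᵀ (B u)`, and Cauchy–Schwarz applied row by row bounds
`‖Bᵀ v‖²` by `‖B‖_F² ‖v‖² = tr P · ‖v‖²`; for `v = B u` this is `tr P · uᵀ P u`.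
-/

open Matrix

theorem Matrix.mulVec_dotProduct_mulVec_self_le_trace_mul_transpose_mul
    {R m n : Type*} [CommRing R] [LinearOrder R] [IsStrictOrderedRing R] [Fintype m] [Fintype n]
    (A : Matrix m n R) (y : n → R) :
    (A *ᵥ y) ⬝ᵥ (A *ᵥ y) ≤ (A * Aᵀ).trace * (y ⬝ᵥ y) := by
  simp only [dotProduct, mulVec, trace, diag, mul_apply, transpose_apply]
  rw [Finset.sum_mul]
  refine Finset.sum_le_sum fun i _ ↦ ?_
  simpa only [sq] using Finset.sum_mul_sq_le_sq_mul_sq Finset.univ (A i) y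

open scoped MatrixOrder in
theorem Matrix.PosSemidef.mulVec_dotProduct_mulVec_self_le_dotProduct_mulVec_mul_trace
    {n : Type*} [Fintype n] {P : Matrix n n ℝ} (hP : P.PosSemidef) (u : n → ℝ) :
    (P *ᵥ u) ⬝ᵥ (P *ᵥ u) ≤ (u ⬝ᵥ (P *ᵥ u)) * P.trace := by
  classical
  obtain ⟨B, rfl⟩ := CStarAlgebra.nonneg_iff_eq_star_mul_self.mp hP.nonneg
  have hB : star B = Bᵀ := conjTranspose_eq_transpose_of_trivial B
  have hquad : u ⬝ᵥ (Bᵀ *ᵥ (B *ᵥ u)) = (B *ᵥ u) ⬝ᵥ (B *ᵥ u) := by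
    rw [dotProduct_mulVec, vecMul_transpose]
  have key := Bᵀ.mulVec_dotProduct_mulVec_self_le_trace_mul_transpose_mul (B *ᵥ u)
  rw [transpose_transpose] at key
  rwa [hB, ← mulVec_mulVec, hquad, mul_comm]

theorem stmt_6_general {n : ℕ} (P : Matrix (Fin n) (Fin n) ℝ)
    (hP : P.PosDef)
    (u : Fin n → ℝ) (hu : u ⬝ᵥ u = 1) :
    (0 < (P *ᵥ u) ⬝ᵥ (P *ᵥ u) ∧
        (P *ᵥ u) ⬝ᵥ (P *ᵥ u) ≤ (u ⬝ᵥ (P *ᵥ u)) * P.trace) ∧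
      (0 < (P *ᵥ u) ⬝ᵥ (P *ᵥ u) / ((u ⬝ᵥ (P *ᵥ u)) * P.trace) ∧
        (P *ᵥ u) ⬝ᵥ (P *ᵥ u) / ((u ⬝ᵥ (P *ᵥ u)) * P.trace) ≤ 1) := by
  have hu0 : u ≠ 0 := by rintro rfl; simp at hu
  have hquad : 0 < u ⬝ᵥ (P *ᵥ u) := by simpa using hP.dotProduct_mulVec_pos hu0
  have hPu0 : P *ᵥ u ≠ 0 := fun h ↦ by simp [h] at hquad
  have hPu : 0 < (P *ᵥ u) ⬝ᵥ (P *ᵥ u) := by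
    simpa only [star_trivial] using dotProduct_self_star_pos_iff.mpr hPu0
  have : Nonempty (Fin n) := ⟨(Function.ne_iff.mp hu0).choose⟩
  have hden : 0 < (u ⬝ᵥ (P *ᵥ u)) * P.trace := mul_pos hquad hP.trace_pos
  have hle := hP.posSemidef.mulVec_dotProduct_mulVec_self_le_dotProduct_mulVec_mul_trace u
  exact ⟨⟨hPu, hle⟩, div_pos hPu hden, (div_le_one hden).mpr hle⟩

/-- For a symmetric positive definite matrix `P` and a unit vector `u`,
`0 < ‖P u‖² ≤ (uᵀ P u) · tr P`; i.e. the ratio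
`r = ‖P u‖² / ((uᵀ P u) · tr P)` satisfies `0 < r ≤ 1`. -/
theorem stmt_6 {n : ℕ} (P : Matrix (Fin n) (Fin n) ℝ)
    (hP : P.PosDef) (hPs : P.IsSymm)
    (u : Fin n → ℝ) (hu : u ⬝ᵥ u = 1) :
    (0 < (P *ᵥ u) ⬝ᵥ (P *ᵥ u) ∧
        (P *ᵥ u) ⬝ᵥ (P *ᵥ u) ≤ (u ⬝ᵥ (P *ᵥ u)) * P.trace) ∧
      (0 < (P *ᵥ u) ⬝ᵥ (P *ᵥ u) / ((u ⬝ᵥ (P *ᵥ u)) * P.trace) ∧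
        (P *ᵥ u) ⬝ᵥ (P *ᵥ u) / ((u ⬝ᵥ (P *ᵥ u)) * P.trace) ≤ 1) :=
  stmt_6_general P hP u hu
end

section
/- Assume σ_m² > 0. There exists ω ∈ [0,1) with tr(P_SCI(ω)) < tr(P_A) if and only if σ_B² < r_A σ_A², where r_A = ‖P_A u‖² / (σ_A² · tr(P_A)). (The optimal SCI filter for agent A with respect to the trace is pertinent exactly under this condition.) -/
open Matrix Filter Topology Set

/-! With `T = tr P_A` and `N = ‖P_A u‖²`, the trace of `P_SCI(ω)` is `(T - ω N / D(ω)) / (1 - ω)`,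
so for `ω ∈ (0, 1)` it drops below `T` exactly when `T D(ω) < N`. Factoring `P_A = BᵀB`,
Cauchy–Schwarz gives `N ≤ σ_A² T`. As `D(ω) ≥ ω σ_A² + (1 - ω) σ_B²`, no `ω` works when
`σ_B² T ≥ N`; conversely, if `σ_B² T < N` then `D(0) = σ_B²` and continuity of `D` provide a small
`ω > 0`. -/

namespace Matrix

variable {m n : Type*} [Fintype m] [Fintype n]

theorem mulVec_dotProduct_mulVec_self_le (S : Matrix m n ℝ) (w : n → ℝ) :
    (S *ᵥ w) ⬝ᵥ (S *ᵥ w) ≤ (S * Sᵀ).trace * (w ⬝ᵥ w) := by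
  have hrow : ∀ i, (S *ᵥ w) i * (S *ᵥ w) i ≤ (S * Sᵀ) i i * (w ⬝ᵥ w) := fun i => by
    simpa only [mulVec, dotProduct, mul_apply, transpose_apply, sq] using
      Finset.sum_mul_sq_le_sq_mul_sq Finset.univ (S i) w
  simpa only [dotProduct, trace, diag, Finset.sum_mul] using Finset.sum_le_sum fun i _ => hrow i

theorem PosSemidef.mulVec_dotProduct_mulVec_self_le {P : Matrix n n ℝ} (hP : P.PosSemidef)
    (u : n → ℝ) : (P *ᵥ u) ⬝ᵥ (P *ᵥ u) ≤ (u ⬝ᵥ (P *ᵥ u)) * P.trace := by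
  classical
  obtain ⟨B, rfl⟩ : ∃ B : Matrix n n ℝ, P = Bᵀ * B := by
    open scoped MatrixOrder in
    simpa [star_eq_conjTranspose] using
      CStarAlgebra.nonneg_iff_eq_star_mul_self.mp (nonneg_iff_posSemidef.mpr hP)
  have hquad : u ⬝ᵥ ((Bᵀ * B) *ᵥ u) = (B *ᵥ u) ⬝ᵥ (B *ᵥ u) := by
    rw [← mulVec_mulVec, dotProduct_mulVec, vecMul_transpose]
  calc ((Bᵀ * B) *ᵥ u) ⬝ᵥ ((Bᵀ * B) *ᵥ u) = (Bᵀ *ᵥ (B *ᵥ u)) ⬝ᵥ (Bᵀ *ᵥ (B *ᵥ u)) := by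
        rw [mulVec_mulVec]
    _ ≤ (Bᵀ * Bᵀᵀ).trace * ((B *ᵥ u) ⬝ᵥ (B *ᵥ u)) :=
        Matrix.mulVec_dotProduct_mulVec_self_le _ _
    _ = (u ⬝ᵥ ((Bᵀ * B) *ᵥ u)) * (Bᵀ * B).trace := by
        rw [transpose_transpose, hquad, mul_comm]

end Matrix

theorem sci_denominator_pos {a b m : ℝ} {D : ℝ → ℝ}
    (hD : ∀ ω, D ω = ω * a + (1 - ω) * (b + ω * m)) (ha : 0 ≤ a) (hb : 0 < b) (hm : 0 ≤ m)
    {ω : ℝ} (hω : ω ∈ Ico 0 1) : 0 < D ω := by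
  obtain ⟨h0, h1⟩ := hω
  rw [hD]
  have hsecond : 0 < (1 - ω) * (b + ω * m) := mul_pos (by linarith) (by positivity)
  nlinarith [mul_nonneg h0 ha]

theorem sci_denominator_ge {a b m : ℝ} {D : ℝ → ℝ}
    (hD : ∀ ω, D ω = ω * a + (1 - ω) * (b + ω * m)) (hm : 0 ≤ m) {ω : ℝ} (hω : ω ∈ Icc 0 1) :
    ω * a + (1 - ω) * b ≤ D ω := by
  obtain ⟨h0, h1⟩ := hω
  rw [hD]
  nlinarith [mul_nonneg (mul_nonneg h0 (sub_nonneg.mpr h1)) hm]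

theorem sci_trace_lt_iff {T N ω d : ℝ} (hω : ω ∈ Ioo 0 1) (hd : 0 < d) :
    1 / (1 - ω) * (T - ω / d * N) < T ↔ T * d < N := by
  obtain ⟨h0, h1⟩ := hω
  rw [one_div_mul_eq_div, div_lt_iff₀ (by linarith), ← sub_pos, ← sub_pos (a := N)]
  have hgap : T * (1 - ω) - (T - ω / d * N) = ω / d * (N - T * d) := by field_simp; ring
  rw [hgap]
  exact ⟨fun h => pos_of_mul_pos_right h (div_pos h0 hd).le, fun h => by positivity⟩

theorem exists_sci_trace_lt_iff {a b m T N : ℝ} {D : ℝ → ℝ}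
    (hD : ∀ ω, D ω = ω * a + (1 - ω) * (b + ω * m)) (ha : 0 ≤ a) (hb : 0 < b) (hm : 0 < m)
    (hT : 0 < T) (hN : N ≤ a * T) :
    (∃ ω ∈ Ico (0 : ℝ) 1, 1 / (1 - ω) * (T - ω / D ω * N) < T) ↔ b * T < N := by
  constructor
  · rintro ⟨ω, hω, hlt⟩
    have hω0 : ω ≠ 0 := by rintro rfl; simp at hlt
    have hTD := (sci_trace_lt_iff ⟨lt_of_le_of_ne hω.1 (Ne.symm hω0), hω.2⟩
      (sci_denominator_pos hD ha hb hm.le hω)).mp hlt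
    have hge := sci_denominator_ge hD hm.le (Ico_subset_Icc_self hω)
    by_contra! hbN
    nlinarith [mul_le_mul_of_nonneg_left hge hT.le, mul_le_mul_of_nonneg_left hN hω.1,
      mul_le_mul_of_nonneg_left hbN (sub_nonneg.mpr hω.2.le)]
  · intro hbN
    have hcont : Continuous D := by
      rw [show D = fun ω => ω * a + (1 - ω) * (b + ω * m) from funext hD]; fun_prop
    have hD0 : T * D 0 < N := by rw [hD]; linarith
    have hnear : ∀ᶠ ω in 𝓝 0, T * D ω < N :=
      (continuous_const.mul hcont).continuousAt.eventually (gt_mem_nhds hD0)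
    obtain ⟨ω, hTD, hω⟩ :=
      ((hnear.filter_mono nhdsWithin_le_nhds).and (Ioo_mem_nhdsGT zero_lt_one)).exists
    exact ⟨ω, Ioo_subset_Ico_self hω,
      (sci_trace_lt_iff hω (sci_denominator_pos hD ha hb hm.le (Ioo_subset_Ico_self hω))).mpr hTD⟩

theorem stmt_12_general {n : ℕ}
    (PA PB : Matrix (Fin n) (Fin n) ℝ)
    (hPA : PA.PosDef) (hPB : PB.PosDef)
    (u : Fin n → ℝ) (hu : u ⬝ᵥ u = 1)
    (σm2 : ℝ)
    (σA2 σB2 : ℝ) (hσA : σA2 = u ⬝ᵥ (PA *ᵥ u)) (hσB : σB2 = u ⬝ᵥ (PB *ᵥ u))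
    (D : ℝ → ℝ) (hD : ∀ ω, D ω = ω * σA2 + (1 - ω) * (σB2 + ω * σm2))
    (PSCI : ℝ → Matrix (Fin n) (Fin n) ℝ)
    (hPSCI : ∀ ω, PSCI ω =
      (1 / (1 - ω)) • (PA - (ω / D ω) • vecMulVec (PA *ᵥ u) (PA *ᵥ u)))
    (hσm : 0 < σm2)
    (rA : ℝ) (hrA : rA = (PA *ᵥ u) ⬝ᵥ (PA *ᵥ u) / (σA2 * PA.trace)) :
    (∃ ω ∈ Set.Ico (0 : ℝ) 1, (PSCI ω).trace < PA.trace) ↔ σB2 < rA * σA2 := by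
  have hu0 : u ≠ 0 := by rintro rfl; simp at hu
  have : Nonempty (Fin n) := (Function.ne_iff.mp hu0).nonempty
  have hσA0 : 0 < σA2 := hσA ▸ hPA.dotProduct_mulVec_pos hu0
  have hσB0 : 0 < σB2 := hσB ▸ hPB.dotProduct_mulVec_pos hu0
  have hT : 0 < PA.trace := hPA.trace_pos
  have htrace : ∀ ω, (PSCI ω).trace =
      1 / (1 - ω) * (PA.trace - ω / D ω * ((PA *ᵥ u) ⬝ᵥ (PA *ᵥ u))) := fun ω => by
    simp only [hPSCI, trace_smul, trace_sub, trace_vecMulVec, smul_eq_mul]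
  have hrAσA : rA * σA2 = (PA *ᵥ u) ⬝ᵥ (PA *ᵥ u) / PA.trace := by
    rw [hrA]; field_simp
  simp only [htrace, hrAσA, lt_div_iff₀ hT]
  exact exists_sci_trace_lt_iff hD hσA0.le hσB0 hσm hT
    (hσA ▸ hPA.posSemidef.mulVec_dotProduct_mulVec_self_le u)

/-- Assuming `σ_m² > 0`: there exists `ω ∈ [0,1)` with
`tr(P_SCI(ω)) < tr P_A` iff `σ_B² < r_A σ_A²`, where
`r_A = ‖P_A u‖² / (σ_A² tr P_A)`. -/
theorem stmt_12 {n : ℕ} (hn : 1 ≤ n)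
    (PA PB : Matrix (Fin n) (Fin n) ℝ)
    (hPA : PA.PosDef) (hPAs : PA.IsSymm) (hPB : PB.PosDef) (hPBs : PB.IsSymm)
    (u : Fin n → ℝ) (hu : u ⬝ᵥ u = 1)
    (σm2 : ℝ)
    (σA2 σB2 : ℝ) (hσA : σA2 = u ⬝ᵥ (PA *ᵥ u)) (hσB : σB2 = u ⬝ᵥ (PB *ᵥ u))
    (D : ℝ → ℝ) (hD : ∀ ω, D ω = ω * σA2 + (1 - ω) * (σB2 + ω * σm2))
    (PSCI : ℝ → Matrix (Fin n) (Fin n) ℝ)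
    (hPSCI : ∀ ω, PSCI ω =
      (1 / (1 - ω)) • (PA - (ω / D ω) • vecMulVec (PA *ᵥ u) (PA *ᵥ u)))
    (hσm : 0 < σm2)
    (rA : ℝ) (hrA : rA = (PA *ᵥ u) ⬝ᵥ (PA *ᵥ u) / (σA2 * PA.trace)) :
    (∃ ω ∈ Set.Ico (0 : ℝ) 1, (PSCI ω).trace < PA.trace) ↔ σB2 < rA * σA2 :=
  stmt_12_general PA PB hPA hPB u hu σm2 σA2 σB2 hσA hσB D hD PSCI hPSCI hσm rA hrA
end

section
/- For every ω ∈ [0,1), det(P_SCI(ω)) = det(P_A) · (σ_B² + ω σ_m²) / ((1−ω)^{n−1} · D(ω)). -/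
/-!
`P_SCI(ω)` is a scalar multiple of the rank-one update `P_A − t v vᵀ` with `v = P_A u` and
`t = ω / D(ω)`. By the matrix determinant lemma its determinant is `det P_A · (1 − t vᵀ P_A⁻¹ v)`,
and `vᵀ P_A⁻¹ v = uᵀ P_A u = σ_A²`. Finally `D(ω) − ω σ_A² = (1 − ω)(σ_B² + ω σ_m²)`, whose factor
`1 − ω` cancels one of the `n` powers coming from the scalar `1 / (1 − ω)`.
-/

open Matrix

namespace Matrix

variable {m α : Type*} [Fintype m] [DecidableEq m] [Field α]

theorem det_one_add_vecMulVec (u v : m → α) : (1 + vecMulVec u v).det = 1 + v ⬝ᵥ u := by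
  rw [vecMulVec_eq Unit, det_one_add_replicateCol_mul_replicateRow]

theorem det_add_vecMulVec {A : Matrix m m α} (hA : IsUnit A.det) (u v : m → α) :
    (A + vecMulVec u v).det = A.det * (1 + v ⬝ᵥ A⁻¹ *ᵥ u) := by
  have hfactor : A + vecMulVec u v = A * (1 + vecMulVec (A⁻¹ *ᵥ u) v) := by
    rw [Matrix.mul_add, Matrix.mul_one, mul_vecMulVec, mulVec_mulVec, mul_nonsing_inv A hA,
      one_mulVec]
  rw [hfactor, det_mul, det_one_add_vecMulVec]

theorem det_sub_smul_vecMulVec_mulVec {A : Matrix m m α} (hA : IsUnit A.det) (t : α)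
    (u : m → α) :
    (A - t • vecMulVec (A *ᵥ u) (A *ᵥ u)).det = A.det * (1 - t * (u ⬝ᵥ A *ᵥ u)) := by
  rw [sub_eq_add_neg, ← neg_smul, ← smul_vecMulVec, det_add_vecMulVec hA, mulVec_smul,
    mulVec_mulVec, nonsing_inv_mul A hA, one_mulVec, dotProduct_smul, dotProduct_comm,
    smul_eq_mul, neg_mul, ← sub_eq_add_neg]

end Matrix

theorem stmt_13_general {n : ℕ} (hn : 1 ≤ n)
    (PA PB : Matrix (Fin n) (Fin n) ℝ)
    (hPA : PA.PosDef) (hPB : PB.PosDef)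
    (u : Fin n → ℝ) (hu : u ⬝ᵥ u = 1)
    (σm2 : ℝ)
    (σA2 σB2 : ℝ) (hσA : σA2 = u ⬝ᵥ (PA *ᵥ u)) (hσB : σB2 = u ⬝ᵥ (PB *ᵥ u))
    (D : ℝ → ℝ) (hD : ∀ ω, D ω = ω * σA2 + (1 - ω) * (σB2 + ω * σm2))
    (PSCI : ℝ → Matrix (Fin n) (Fin n) ℝ)
    (hPSCI : ∀ ω, PSCI ω =
      (1 / (1 - ω)) • (PA - (ω / D ω) • vecMulVec (PA *ᵥ u) (PA *ᵥ u)))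
    (hσm : 0 ≤ σm2) :
    ∀ ω ∈ Set.Ico (0 : ℝ) 1,
      (PSCI ω).det = PA.det * (σB2 + ω * σm2) / ((1 - ω) ^ (n - 1) * D ω) := by
  rintro ω ⟨hω0, hω1⟩
  have hu0 : u ≠ 0 := by rintro rfl; simp at hu
  have hσA_pos : 0 < σA2 := hσA ▸ hPA.dotProduct_mulVec_pos hu0
  have hσB_pos : 0 < σB2 := hσB ▸ hPB.dotProduct_mulVec_pos hu0
  have h1ω_pos : 0 < 1 - ω := sub_pos.mpr hω1
  have hD_pos : 0 < D ω := by
    rw [hD]; positivity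
  have hPA_det : IsUnit PA.det := (isUnit_iff_isUnit_det PA).mp hPA.isUnit
  obtain ⟨k, rfl⟩ := Nat.exists_eq_add_of_le' hn
  rw [hPSCI, det_smul, Fintype.card_fin, det_sub_smul_vecMulVec_mulVec hPA_det, ← hσA,
    Nat.add_sub_cancel]
  have hnumerator : 1 - ω / D ω * σA2 = (1 - ω) * (σB2 + ω * σm2) / D ω := by
    field_simp; linear_combination hD ω
  rw [hnumerator, one_div, inv_pow, pow_succ]
  field_simp

/-- Determinant of the SCI covariance:
`det(P_SCI(ω)) = det P_A · (σ_B² + ω σ_m²) / ((1−ω)^(n−1) · D(ω))`. -/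
theorem stmt_13 {n : ℕ} (hn : 1 ≤ n)
    (PA PB : Matrix (Fin n) (Fin n) ℝ)
    (hPA : PA.PosDef) (hPAs : PA.IsSymm) (hPB : PB.PosDef) (hPBs : PB.IsSymm)
    (u : Fin n → ℝ) (hu : u ⬝ᵥ u = 1)
    (σm2 : ℝ)
    (σA2 σB2 : ℝ) (hσA : σA2 = u ⬝ᵥ (PA *ᵥ u)) (hσB : σB2 = u ⬝ᵥ (PB *ᵥ u))
    (D : ℝ → ℝ) (hD : ∀ ω, D ω = ω * σA2 + (1 - ω) * (σB2 + ω * σm2))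
    (PSCI : ℝ → Matrix (Fin n) (Fin n) ℝ)
    (hPSCI : ∀ ω, PSCI ω =
      (1 / (1 - ω)) • (PA - (ω / D ω) • vecMulVec (PA *ᵥ u) (PA *ᵥ u)))
    (hσm : 0 ≤ σm2) :
    ∀ ω ∈ Set.Ico (0 : ℝ) 1,
      (PSCI ω).det = PA.det * (σB2 + ω * σm2) / ((1 - ω) ^ (n - 1) * D ω) :=
  stmt_13_general hn PA PB hPA hPB u hu σm2 σA2 σB2 hσA hσB D hD PSCI hPSCI hσm
end

section
/- Assume σ_m² > 0. The function h : ω ↦ det(P_SCI(ω)) is convex on the interval [0,1). -/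
/-!
By the matrix determinant lemma, `det P_SCI(ω) = det P_A / ((1 - ω) ^ (n - 1) * φ ω)` with
`φ ω = (1 - ω) + σ_A² ω / (σ_B² + σ_m² ω) = D ω / (σ_B² + σ_m² ω)`. Both `1 - ω` and `φ` are
positive and concave on `[0, 1)`, so `-log` of each is convex; hence `h` is log-convex, and
therefore convex.
-/

open Matrix Real Set

theorem Matrix.det_sub_vecMulVec_mulVec {m R : Type*} [Fintype m] [DecidableEq m] [CommRing R]
    (A : Matrix m m R) (u v : m → R) :
    (A - vecMulVec (A *ᵥ u) v).det = A.det * (1 - v ⬝ᵥ u) := by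
  rw [← mul_vecMulVec, ← Matrix.mul_one A, Matrix.mul_assoc, Matrix.one_mul, ← Matrix.mul_sub,
    det_mul, vecMulVec_eq Unit, det_one_sub_mul_comm]
  simp [replicateRow_mul_replicateCol]

theorem ConcaveOn.log {s : Set ℝ} {f : ℝ → ℝ} (hf : ConcaveOn ℝ s f)
    (hpos : ∀ x ∈ s, 0 < f x) : ConcaveOn ℝ s (fun x => Real.log (f x)) := by
  refine ⟨hf.1, fun x hx y hy a b ha hb hab => ?_⟩
  have hmix : 0 < a • f x + b • f y := convex_Ioi (0 : ℝ) (hpos x hx) (hpos y hy) ha hb hab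
  calc a • Real.log (f x) + b • Real.log (f y) ≤ Real.log (a • f x + b • f y) :=
        strictConcaveOn_log_Ioi.concaveOn.2 (hpos x hx) (hpos y hy) ha hb hab
    _ ≤ Real.log (f (a • x + b • y)) := log_le_log hmix (hf.2 hx hy ha hb hab)

theorem ConvexOn.exp {s : Set ℝ} {f : ℝ → ℝ} (hf : ConvexOn ℝ s f) :
    ConvexOn ℝ s (fun x => Real.exp (f x)) := by
  refine ⟨hf.1, fun x hx y hy a b ha hb hab => ?_⟩
  calc Real.exp (f (a • x + b • y)) ≤ Real.exp (a • f x + b • f y) :=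
        exp_le_exp.2 (hf.2 hx hy ha hb hab)
    _ ≤ a • Real.exp (f x) + b • Real.exp (f y) := convexOn_exp.2 trivial trivial ha hb hab

theorem ConcaveOn.convexOn_inv_pow_mul {s : Set ℝ} {f g : ℝ → ℝ} (k : ℕ)
    (hf : ConcaveOn ℝ s f) (hg : ConcaveOn ℝ s g)
    (hf₀ : ∀ x ∈ s, 0 < f x) (hg₀ : ∀ x ∈ s, 0 < g x) :
    ConvexOn ℝ s (fun x => (f x ^ k * g x)⁻¹) := by
  have hlog : ConvexOn ℝ s (fun x => (k : ℝ) • -Real.log (f x) + -Real.log (g x)) :=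
    ((hf.log hf₀).neg.smul k.cast_nonneg).add (hg.log hg₀).neg
  refine hlog.exp.congr fun x hx => ?_
  simp only [smul_eq_mul, exp_add, exp_nat_mul, exp_neg, exp_log (hf₀ x hx),
    exp_log (hg₀ x hx), mul_inv, inv_pow]

theorem concaveOn_mul_div_add_mul {a b m : ℝ} (ha : 0 ≤ a) (hb : 0 < b) (hm : 0 ≤ m) :
    ConcaveOn ℝ (Ici 0) (fun x => a * x / (b + m * x)) := by
  refine ⟨convex_Ici 0, fun x (hx : 0 ≤ x) y (hy : 0 ≤ y) α β hα hβ hαβ => ?_⟩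
  have hX : 0 < b + m * x := by positivity
  have hY : 0 < b + m * y := by positivity
  have hZ : 0 < b + m * (α * x + β * y) := by positivity
  simp only [smul_eq_mul]
  rw [mul_div_assoc', mul_div_assoc', div_add_div _ _ hX.ne' hY.ne',
    div_le_div_iff₀ (by positivity) hZ]
  obtain rfl : β = 1 - α := by linarith
  -- after cross-multiplying, the gap between the two sides is exactly `a m b α β (x - y)²`
  have key : 0 ≤ a * m * b * α * (1 - α) * (x - y) ^ 2 := by positivity
  linear_combination key

theorem convexOn_inv_one_sub_pow_mul_add_div (k : ℕ) {a b m : ℝ} (ha : 0 ≤ a) (hb : 0 < b)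
    (hm : 0 ≤ m) :
    ConvexOn ℝ (Ico 0 1) (fun ω => ((1 - ω) ^ k * ((1 - ω) + a * ω / (b + m * ω)))⁻¹) := by
  have hlin : ConcaveOn ℝ (Ico 0 1) (fun ω : ℝ => 1 - ω) :=
    (concaveOn_const 1 (convex_Ico 0 1)).sub (convexOn_id (convex_Ico 0 1))
  have hlin₀ : ∀ ω ∈ Ico (0 : ℝ) 1, 0 < 1 - ω := fun ω hω => sub_pos.2 hω.2
  refine hlin.convexOn_inv_pow_mul k (hlin.add ?_) hlin₀ fun ω hω => ?_
  · exact (concaveOn_mul_div_add_mul ha hb hm).subset Ico_subset_Ici_self (convex_Ico 0 1)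
  · have := hlin₀ ω hω
    have := hω.1
    positivity

theorem one_div_pow_succ_mul_one_sub_div (k : ℕ) {t B a ω C D : ℝ} (ht : t ≠ 0) (hB : B ≠ 0)
    (hD₀ : D ≠ 0) (hD : D = ω * a + t * B) :
    (1 / t) ^ (k + 1) * (C * (1 - ω / D * a)) = C * (t ^ k * (t + a * ω / B))⁻¹ := by
  have h₁ : 1 - ω / D * a = t * B / D := by field_simp; linarith
  have h₂ : t + a * ω / B = D / B := by field_simp; linarith
  rw [h₁, h₂, _root_.one_div_pow]
  field_simp
  ring

theorem stmt_14_general {n : ℕ}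
    (PA PB : Matrix (Fin n) (Fin n) ℝ)
    (hPA : PA.PosDef) (hPB : PB.PosDef)
    (u : Fin n → ℝ) (hu : u ⬝ᵥ u = 1)
    (σm2 : ℝ)
    (σA2 σB2 : ℝ) (hσA : σA2 = u ⬝ᵥ (PA *ᵥ u)) (hσB : σB2 = u ⬝ᵥ (PB *ᵥ u))
    (D : ℝ → ℝ) (hD : ∀ ω, D ω = ω * σA2 + (1 - ω) * (σB2 + ω * σm2))
    (PSCI : ℝ → Matrix (Fin n) (Fin n) ℝ)
    (hPSCI : ∀ ω, PSCI ω =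
      (1 / (1 - ω)) • (PA - (ω / D ω) • vecMulVec (PA *ᵥ u) (PA *ᵥ u)))
    (hσm : 0 < σm2) :
    ConvexOn ℝ (Set.Ico (0 : ℝ) 1) (fun ω => (PSCI ω).det) := by
  have hu₀ : u ≠ 0 := by rintro rfl; simp at hu
  obtain ⟨i, -⟩ := Function.ne_iff.mp hu₀
  obtain ⟨k, rfl⟩ : ∃ k, n = k + 1 := Nat.exists_eq_add_one.mpr i.pos
  have hσA₀ : 0 < σA2 := hσA ▸ hPA.dotProduct_mulVec_pos hu₀
  have hσB₀ : 0 < σB2 := hσB ▸ hPB.dotProduct_mulVec_pos hu₀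
  refine ((convexOn_inv_one_sub_pow_mul_add_div k hσA₀.le hσB₀ hσm.le).smul
    hPA.det_pos.le).congr fun ω ⟨hω₀, hω₁⟩ => ?_
  have hB₀ : 0 < σB2 + σm2 * ω := by positivity
  have ht₀ : 0 < 1 - ω := sub_pos.2 hω₁
  have hD₀ : 0 < D ω := by rw [hD]; positivity
  rw [hPSCI, det_smul, ← smul_vecMulVec, ← mulVec_smul, det_sub_vecMulVec_mulVec,
    dotProduct_smul, dotProduct_comm, ← hσA, Fintype.card_fin, smul_eq_mul]
  exact (one_div_pow_succ_mul_one_sub_div k ht₀.ne' hB₀.ne' hD₀.ne' (by rw [hD]; ring)).symm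

/-- Assuming `σ_m² > 0`, the function `h : ω ↦ det(P_SCI(ω))` is convex on
`[0,1)`. -/
theorem stmt_14 {n : ℕ} (hn : 1 ≤ n)
    (PA PB : Matrix (Fin n) (Fin n) ℝ)
    (hPA : PA.PosDef) (hPAs : PA.IsSymm) (hPB : PB.PosDef) (hPBs : PB.IsSymm)
    (u : Fin n → ℝ) (hu : u ⬝ᵥ u = 1)
    (σm2 : ℝ)
    (σA2 σB2 : ℝ) (hσA : σA2 = u ⬝ᵥ (PA *ᵥ u)) (hσB : σB2 = u ⬝ᵥ (PB *ᵥ u))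
    (D : ℝ → ℝ) (hD : ∀ ω, D ω = ω * σA2 + (1 - ω) * (σB2 + ω * σm2))
    (PSCI : ℝ → Matrix (Fin n) (Fin n) ℝ)
    (hPSCI : ∀ ω, PSCI ω =
      (1 / (1 - ω)) • (PA - (ω / D ω) • vecMulVec (PA *ᵥ u) (PA *ᵥ u)))
    (hσm : 0 < σm2) :
    ConvexOn ℝ (Set.Ico (0 : ℝ) 1) (fun ω => (PSCI ω).det) :=
  stmt_14_general PA PB hPA hPB u hu σm2 σA2 σB2 hσA hσB D hD PSCI hPSCI hσm
end

section
/- Assume σ_m² > 0. There exists ω ∈ [0,1) with det(P_SCI(ω)) < det(P_A) if and only if n σ_B² < σ_A², i.e., σ_B² < σ_A²/n. (The optimal SCI filter for agent A with respect to the determinant is pertinent exactly under this condition.) -/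
open Matrix Filter Topology

/-! By the matrix determinant lemma,
`det P_SCI(ω) = det P_A · (1 - ω)(σ_B² + ω σ_m²) / ((1 - ω)ⁿ D(ω))`, so the question is whether
`(1 - ω)(σ_B² + ω σ_m²) < (1 - ω)ⁿ D(ω)` for some `ω ∈ [0, 1)`.
If `σ_A² ≤ n σ_B²`, then `D(ω) ≤ σ_B² (1 + (n - 1) ω) + (1 - ω) ω σ_m²`, and
`(1 - ω)ⁿ⁻¹ (1 + (n - 1) ω) ≤ (1 - ω²)ⁿ⁻¹ ≤ 1` (Bernoulli for `1 + ω`) rules the inequality out.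
If `n σ_B² < σ_A²`, Bernoulli's `1 - n ω ≤ (1 - ω)ⁿ` shows that the gap is at least
`ω (σ_A² - n D(ω))`, which is positive for small `ω > 0` since `D(0) = σ_B²`. -/

theorem Matrix.det_sub_smul_vecMulVec_mulVec_s16 {n R : Type*} [Fintype n] [DecidableEq n]
    [CommRing R] (A : Matrix n n R) (u v : n → R) (c : R) :
    (A - c • vecMulVec (A *ᵥ u) v).det = A.det * (1 - c * (v ⬝ᵥ u)) := by
  have h : A - c • vecMulVec (A *ᵥ u) v =
      A * (1 + replicateCol Unit (-c • u) * replicateRow Unit v) := by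
    rw [← vecMulVec_eq, Matrix.mul_add, Matrix.mul_one, mul_vecMulVec, mulVec_smul,
      smul_vecMulVec, sub_eq_add_neg, neg_smul]
  rw [h, det_mul, det_one_add_replicateCol_mul_replicateRow, dotProduct_smul, smul_eq_mul]
  ring

def sciDenom (a b m ω : ℝ) : ℝ := ω * a + (1 - ω) * (b + ω * m)

section
variable {a b m ω : ℝ}

lemma sciDenom_pos (ha : 0 ≤ a) (hb : 0 < b) (hm : 0 ≤ m) (hω : ω ∈ Set.Ico 0 1) :
    0 < sciDenom a b m ω :=
  add_pos_of_nonneg_of_pos (mul_nonneg hω.1 ha)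
    (mul_pos (sub_pos.2 hω.2) (add_pos_of_pos_of_nonneg hb (mul_nonneg hω.1 hm)))

lemma det_sciCov {ι : Type*} [Fintype ι] [DecidableEq ι] (A : Matrix ι ι ℝ) (u : ι → ℝ)
    (ha : u ⬝ᵥ (A *ᵥ u) = a) (hD : sciDenom a b m ω ≠ 0) :
    ((1 / (1 - ω)) • (A - (ω / sciDenom a b m ω) • vecMulVec (A *ᵥ u) (A *ᵥ u))).det =
      (1 / (1 - ω)) ^ Fintype.card ι * (A.det * ((1 - ω) * (b + ω * m) / sciDenom a b m ω)) := by
  rw [det_smul, det_sub_smul_vecMulVec_mulVec_s16, dotProduct_comm, ha]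
  congr 2
  field_simp
  unfold sciDenom
  ring

lemma det_sciCov_lt_iff {ι : Type*} [Fintype ι] [DecidableEq ι] (A : Matrix ι ι ℝ)
    (u : ι → ℝ) (ha : u ⬝ᵥ (A *ᵥ u) = a) (hA : 0 < A.det) (ha₀ : 0 ≤ a) (hb : 0 < b)
    (hm : 0 ≤ m) (hω : ω ∈ Set.Ico 0 1) :
    ((1 / (1 - ω)) • (A - (ω / sciDenom a b m ω) • vecMulVec (A *ᵥ u) (A *ᵥ u))).det < A.det ↔
      (1 - ω) * (b + ω * m) < (1 - ω) ^ Fintype.card ι * sciDenom a b m ω := by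
  have hD := sciDenom_pos ha₀ hb hm hω
  rw [det_sciCov A u ha hD.ne', one_div, inv_pow, inv_mul_lt_iff₀ (pow_pos (sub_pos.2 hω.2) _),
    mul_comm _ A.det, mul_lt_mul_iff_right₀ hA, div_lt_iff₀ hD]

lemma one_sub_pow_mul_one_add_mul_le_one (k : ℕ) (hω₀ : 0 ≤ ω) (hω₁ : ω ≤ 1) :
    (1 - ω) ^ k * (1 + k * ω) ≤ 1 :=
  calc (1 - ω) ^ k * (1 + k * ω) ≤ (1 - ω) ^ k * (1 + ω) ^ k :=
        mul_le_mul_of_nonneg_left (one_add_mul_le_pow (by linarith) k) (by positivity)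
    _ = (1 - ω ^ 2) ^ k := by rw [← mul_pow]; ring
    _ ≤ 1 := pow_le_one₀ (by nlinarith) (by nlinarith)

lemma pow_mul_sciDenom_le (n : ℕ) (ha : a ≤ n * b) (hb : 0 ≤ b) (hm : 0 ≤ m)
    (hω₀ : 0 ≤ ω) (hω₁ : ω ≤ 1) :
    (1 - ω) ^ n * sciDenom a b m ω ≤ (1 - ω) * (b + ω * m) := by
  rcases n with _ | k
  · have : ω * a ≤ 0 := mul_nonpos_of_nonneg_of_nonpos hω₀ (by simpa using ha)
    simp only [pow_zero, one_mul, sciDenom]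
    linarith
  · have hk : (1 - ω) ^ k * sciDenom a b m ω ≤ b + ω * m := by
      have hD : sciDenom a b m ω ≤ b * (1 + k * ω) + (1 - ω) * (ω * m) := by
        have := mul_le_mul_of_nonneg_left ha hω₀
        push_cast at this
        unfold sciDenom
        linarith
      calc (1 - ω) ^ k * sciDenom a b m ω
          ≤ (1 - ω) ^ k * (b * (1 + k * ω) + (1 - ω) * (ω * m)) := by gcongr
        _ = b * ((1 - ω) ^ k * (1 + k * ω)) + (1 - ω) ^ (k + 1) * (ω * m) := by ring
        _ ≤ b * 1 + 1 * (ω * m) := by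
          gcongr
          · exact one_sub_pow_mul_one_add_mul_le_one k hω₀ hω₁
          · exact pow_le_one₀ (by linarith) (by linarith)
        _ = b + ω * m := by ring
    rw [pow_succ, mul_comm _ (1 - ω), mul_assoc]
    exact mul_le_mul_of_nonneg_left hk (by linarith)

lemma exists_lt_pow_mul_sciDenom (n : ℕ) (hnb : n * b < a) (hb : 0 < b) (hm : 0 ≤ m) :
    ∃ ω ∈ Set.Ioo (0 : ℝ) 1, (1 - ω) * (b + ω * m) < (1 - ω) ^ n * sciDenom a b m ω := by
  have hlim : Tendsto (fun ω => n * sciDenom a b m ω) (𝓝[>] 0) (𝓝 (n * b)) := by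
    have hc : Continuous (fun ω => n * sciDenom a b m ω) := by unfold sciDenom; fun_prop
    simpa [sciDenom] using hc.continuousAt.tendsto.mono_left (nhdsWithin_le_nhds (a := 0))
  obtain ⟨ω, hnD, hω⟩ := ((hlim.eventually (gt_mem_nhds hnb)).and (Ioo_mem_nhdsGT one_pos)).exists
  refine ⟨ω, hω, ?_⟩
  have hbern : 1 - n * ω ≤ (1 - ω) ^ n := by
    simpa [← sub_eq_add_neg] using one_add_mul_sub_le_pow (a := 1 - ω) (by linarith [hω.2]) n
  have hD := sciDenom_pos ((mul_nonneg n.cast_nonneg hb.le).trans hnb.le) hb hm (Set.Ioo_subset_Ico_self hω)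
  calc (1 - ω) * (b + ω * m) < (1 - ω) * (b + ω * m) + ω * (a - n * sciDenom a b m ω) :=
        lt_add_of_pos_right _ (mul_pos hω.1 (sub_pos.2 hnD))
    _ = (1 - n * ω) * sciDenom a b m ω := by unfold sciDenom; ring
    _ ≤ (1 - ω) ^ n * sciDenom a b m ω := mul_le_mul_of_nonneg_right hbern hD.le

lemma exists_lt_pow_mul_sciDenom_iff (n : ℕ) (hb : 0 < b) (hm : 0 ≤ m) :
    (∃ ω ∈ Set.Ico (0 : ℝ) 1, (1 - ω) * (b + ω * m) < (1 - ω) ^ n * sciDenom a b m ω) ↔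
      n * b < a := by
  refine ⟨fun ⟨ω, hω, hlt⟩ => ?_, fun hnb => ?_⟩
  · by_contra! ha
    exact hlt.not_ge (pow_mul_sciDenom_le n ha hb.le hm hω.1 hω.2.le)
  · obtain ⟨ω, hω, hlt⟩ := exists_lt_pow_mul_sciDenom n hnb hb hm
    exact ⟨ω, Set.Ioo_subset_Ico_self hω, hlt⟩

end

theorem stmt_16_general {n : ℕ}
    (PA PB : Matrix (Fin n) (Fin n) ℝ)
    (hPA : PA.PosDef) (hPB : PB.PosDef)
    (u : Fin n → ℝ) (hu : u ⬝ᵥ u = 1)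
    (σm2 : ℝ)
    (σA2 σB2 : ℝ) (hσA : σA2 = u ⬝ᵥ (PA *ᵥ u)) (hσB : σB2 = u ⬝ᵥ (PB *ᵥ u))
    (D : ℝ → ℝ) (hD : ∀ ω, D ω = ω * σA2 + (1 - ω) * (σB2 + ω * σm2))
    (PSCI : ℝ → Matrix (Fin n) (Fin n) ℝ)
    (hPSCI : ∀ ω, PSCI ω =
      (1 / (1 - ω)) • (PA - (ω / D ω) • vecMulVec (PA *ᵥ u) (PA *ᵥ u)))
    (hσm : 0 < σm2) :
    (∃ ω ∈ Set.Ico (0 : ℝ) 1, (PSCI ω).det < PA.det) ↔ (n : ℝ) * σB2 < σA2 := by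
  obtain rfl : D = sciDenom σA2 σB2 σm2 := funext hD
  have hu₀ : u ≠ 0 := by
    rintro rfl
    simp at hu
  have hA : 0 < σA2 := hσA ▸ hPA.dotProduct_mulVec_pos hu₀
  have hB : 0 < σB2 := hσB ▸ hPB.dotProduct_mulVec_pos hu₀
  rw [← exists_lt_pow_mul_sciDenom_iff n hB hσm.le]
  refine exists_congr fun ω => and_congr_right fun hω => ?_
  rw [hPSCI, det_sciCov_lt_iff PA u hσA.symm hPA.det_pos hA.le hB hσm.le hω, Fintype.card_fin]

/-- Assuming `σ_m² > 0`: there exists `ω ∈ [0,1)` with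
`det(P_SCI(ω)) < det P_A` iff `n σ_B² < σ_A²`. -/
theorem stmt_16 {n : ℕ} (hn : 1 ≤ n)
    (PA PB : Matrix (Fin n) (Fin n) ℝ)
    (hPA : PA.PosDef) (hPAs : PA.IsSymm) (hPB : PB.PosDef) (hPBs : PB.IsSymm)
    (u : Fin n → ℝ) (hu : u ⬝ᵥ u = 1)
    (σm2 : ℝ)
    (σA2 σB2 : ℝ) (hσA : σA2 = u ⬝ᵥ (PA *ᵥ u)) (hσB : σB2 = u ⬝ᵥ (PB *ᵥ u))
    (D : ℝ → ℝ) (hD : ∀ ω, D ω = ω * σA2 + (1 - ω) * (σB2 + ω * σm2))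
    (PSCI : ℝ → Matrix (Fin n) (Fin n) ℝ)
    (hPSCI : ∀ ω, PSCI ω =
      (1 / (1 - ω)) • (PA - (ω / D ω) • vecMulVec (PA *ᵥ u) (PA *ᵥ u)))
    (hσm : 0 < σm2) :
    (∃ ω ∈ Set.Ico (0 : ℝ) 1, (PSCI ω).det < PA.det) ↔ (n : ℝ) * σB2 < σA2 :=
  stmt_16_general PA PB hPA hPB u hu σm2 σA2 σB2 hσA hσB D hD PSCI hPSCI hσm
end

section
/- Consistency of the SCI filter: let ω ∈ [0,1) and set w = (ω/D(ω)) P_A u ∈ ℝⁿ. Let P̃_A, P̃_B be symmetric n×n matrices and P̃_AB an n×n matrix such that the 2n×2n block matrix [[P̃_A, P̃_AB],[P̃_ABᵀ, P̃_B]] is positive semidefinite, P̃_A ⪯ P_A, and P̃_B ⪯ P_B. Set σ̃_A² = uᵀ P̃_A u, σ̃_B² = uᵀ P̃_B u, γ̃ = uᵀ P̃_AB u, and define the fused mean-squared-error matrix P̃_F = P̃_A + (σ̃_A² + σ̃_B² − 2γ̃ + σ_m²) w wᵀ − (P̃_A − P̃_AB) u wᵀ − w uᵀ (P̃_A − P̃_ABᵀ).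 Then P̃_F ⪯ P_SCI(ω). -/
/-!
The fused error is `(1 - w uᵀ) e_A + w uᵀ e_B + w v`, so `P̃_F = G P̃ Gᵀ + σ_m² w wᵀ`, where
`G = [1 - w uᵀ, w uᵀ]` and `P̃` is the joint block covariance. Covariance intersection gives
`P̃ ⪯ diag(P̃_A / (1 - ω), P̃_B / ω) ⪯ diag(P_A / (1 - ω), P_B / ω)`: the first gap is `P̃` congruent
under `diag(ω, -(1 - ω))`, up to the factor `ω (1 - ω)`. Congruence by `G` preserves `⪯`, and for
the SCI gain `w = (ω / D) P_A u` the matrix `G diag(P_A / (1 - ω), P_B / ω) Gᵀ + σ_m² w wᵀ` is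
exactly `P_SCI(ω)`, because `(ω / D)² D = (ω / D) ω`. At `ω = 0` the gain vanishes and the claim is
`P̃_A ⪯ P_A`.
-/

open Matrix
open scoped MatrixOrder

namespace Matrix

variable {m n : Type*} [Fintype m] [Fintype n]

theorem PosSemidef.fromBlocks_zero_zero {R : Type*} [Ring R] [PartialOrder R] [StarRing R]
    [AddLeftMono R] {A : Matrix m m R} {C : Matrix n n R} (hA : A.PosSemidef)
    (hC : C.PosSemidef) : (fromBlocks A 0 0 C).PosSemidef := by
  classical
  let E₁ : Matrix m (m ⊕ n) R := fromCols 1 0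
  let E₂ : Matrix n (m ⊕ n) R := fromCols 0 1
  have hsplit : fromBlocks A 0 0 C = E₁ᴴ * A * E₁ + E₂ᴴ * C * E₂ := by
    ext (i | i) (j | j) <;>
      simp [E₁, E₂, conjTranspose_fromCols_eq_fromRows_conjTranspose, fromRows_mul]
  rw [hsplit]
  exact (hA.conjTranspose_mul_mul_same E₁).add (hC.conjTranspose_mul_mul_same E₂)

theorem fromBlocks_zero_zero_le_fromBlocks_zero_zero {A A' : Matrix m m ℝ}
    {C C' : Matrix n n ℝ} (hA : A ≤ A') (hC : C ≤ C') :
    fromBlocks A 0 0 C ≤ fromBlocks A' 0 0 C' := by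
  have hdiff : fromBlocks A' 0 0 C' - fromBlocks A 0 0 C = fromBlocks (A' - A) 0 0 (C' - C) := by
    simp [sub_eq_add_neg, fromBlocks_neg, fromBlocks_add]
  rw [le_iff, hdiff]
  exact (le_iff.mp hA).fromBlocks_zero_zero (le_iff.mp hC)

theorem mul_mul_transpose_le_mul_mul_transpose {X Y : Matrix n n ℝ} (h : X ≤ Y)
    (M : Matrix m n ℝ) : M * X * Mᵀ ≤ M * Y * Mᵀ := by
  rw [le_iff, ← Matrix.sub_mul, ← Matrix.mul_sub]
  simpa using (le_iff.mp h).mul_mul_conjTranspose_same M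

theorem fromBlocks_le_fromBlocks_inv_smul {A : Matrix m m ℝ} {B : Matrix m n ℝ}
    {C : Matrix n n ℝ} (h : (fromBlocks A B Bᵀ C).PosSemidef) {ω : ℝ} (hω0 : 0 < ω)
    (hω1 : ω < 1) : fromBlocks A B Bᵀ C ≤ fromBlocks ((1 - ω)⁻¹ • A) 0 0 (ω⁻¹ • C) := by
  classical
  let S : Matrix (m ⊕ n) (m ⊕ n) ℝ := fromBlocks (ω • 1) 0 0 (-(1 - ω) • 1)
  have hS : S * fromBlocks A B Bᵀ C * Sᵀ = fromBlocks ((ω * ω) • A) (-(ω * (1 - ω)) • B)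
      (-(ω * (1 - ω)) • Bᵀ) (((1 - ω) * (1 - ω)) • C) := by
    simp only [S, fromBlocks_transpose, fromBlocks_multiply]
    congr 1 <;> simp <;> module
  have hsplit : fromBlocks ((1 - ω)⁻¹ • A) 0 0 (ω⁻¹ • C)
      = fromBlocks A B Bᵀ C + (ω * (1 - ω))⁻¹ • (S * fromBlocks A B Bᵀ C * Sᵀ) := by
    have : 1 - ω ≠ 0 := by linarith
    rw [hS, fromBlocks_smul, fromBlocks_add]
    congr 1 <;> match_scalars <;> field_simp <;> ring
  rw [le_iff, hsplit, add_sub_cancel_left]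
  exact (by simpa using h.mul_mul_conjTranspose_same S : (S * _ * Sᵀ).PosSemidef).smul
    (inv_nonneg.mpr (mul_nonneg hω0.le (sub_nonneg.mpr hω1.le)))

section FusionGain

variable {R : Type*} [CommRing R] [DecidableEq n]

def fusionGain (w u : n → R) : Matrix n (n ⊕ n) R :=
  fromCols (1 - vecMulVec w u) (vecMulVec w u)

theorem fusionGain_mul_fromBlocks_mul_transpose (w u : n → R) (A B C : Matrix n n R) :
    fusionGain w u * fromBlocks A B Bᵀ C * (fusionGain w u)ᵀ =
      A + (u ⬝ᵥ A *ᵥ u + u ⬝ᵥ C *ᵥ u - 2 * u ⬝ᵥ B *ᵥ u) • vecMulVec w w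
        - vecMulVec ((A - B) *ᵥ u) w - vecMulVec w (u ᵥ* (A - Bᵀ)) := by
  have hB : (u ᵥ* Bᵀ) ⬝ᵥ u = u ⬝ᵥ B *ᵥ u := by
    rw [vecMul_transpose, dotProduct_comm]
  simp only [fusionGain, fromCols_mul_fromBlocks, transpose_fromCols, fromCols_mul_fromRows,
    transpose_sub, transpose_one, transpose_vecMulVec, sub_mul, mul_sub, add_mul,
    one_mul, mul_one, vecMulVec_mul, mul_vecMulVec, vecMulVec_mulVec, op_smul_eq_smul,
    smul_vecMulVec, sub_mulVec, vecMul_sub, sub_vecMulVec, vecMulVec_sub,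
    ← dotProduct_mulVec, hB]
  module

theorem fusionGain_mul_fromBlocks_inv_smul_mul_transpose {P Q : Matrix n n ℝ} (hP : P.IsSymm)
    (u : n → ℝ) {s ω c : ℝ} (hω0 : 0 < ω) (hω1 : ω < 1)
    (hc : c = ω / (ω * (u ⬝ᵥ P *ᵥ u) + (1 - ω) * (u ⬝ᵥ Q *ᵥ u + ω * s))) :
    fusionGain (c • P *ᵥ u) u * fromBlocks ((1 - ω)⁻¹ • P) 0 0 (ω⁻¹ • Q)
        * (fusionGain (c • P *ᵥ u) u)ᵀ + s • vecMulVec (c • P *ᵥ u) (c • P *ᵥ u)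
      = (1 / (1 - ω)) • (P - c • vecMulVec (P *ᵥ u) (P *ᵥ u)) := by
  set d := ω * (u ⬝ᵥ P *ᵥ u) + (1 - ω) * (u ⬝ᵥ Q *ᵥ u + ω * s)
  have hcd : c * (c * d) = c * ω := by
    rcases eq_or_ne d 0 with hd | hd
    · simp [hc, hd]
    · rw [hc]; field_simp
  have hPu : u ᵥ* P = P *ᵥ u := by rw [← vecMul_transpose, hP.eq]
  have hconj := fusionGain_mul_fromBlocks_mul_transpose (c • P *ᵥ u) u ((1 - ω)⁻¹ • P) 0 (ω⁻¹ • Q)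
  rw [transpose_zero] at hconj
  rw [hconj]
  simp only [zero_mulVec, dotProduct_zero, mul_zero, sub_zero, smul_mulVec, vecMul_smul, hPu,
    dotProduct_smul, smul_vecMulVec, vecMulVec_smul, smul_eq_mul]
  have : 1 - ω ≠ 0 := by linarith
  match_scalars <;> field_simp
  linear_combination hcd

end FusionGain

end Matrix

theorem stmt_17_general {n : ℕ}
    (PA PB : Matrix (Fin n) (Fin n) ℝ)
    (hPAs : PA.IsSymm)
    (u : Fin n → ℝ)
    (σm2 : ℝ)
    (σA2 σB2 : ℝ) (hσA : σA2 = u ⬝ᵥ (PA *ᵥ u)) (hσB : σB2 = u ⬝ᵥ (PB *ᵥ u))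
    (D : ℝ → ℝ) (hD : ∀ ω, D ω = ω * σA2 + (1 - ω) * (σB2 + ω * σm2))
    (PSCI : ℝ → Matrix (Fin n) (Fin n) ℝ)
    (hPSCI : ∀ ω, PSCI ω =
      (1 / (1 - ω)) • (PA - (ω / D ω) • vecMulVec (PA *ᵥ u) (PA *ᵥ u)))
    (ω : ℝ) (hω : ω ∈ Set.Ico (0 : ℝ) 1)
    (w : Fin n → ℝ) (hw : w = (ω / D ω) • (PA *ᵥ u))
    (PtA PtB PtAB : Matrix (Fin n) (Fin n) ℝ)
    (hblock : (Matrix.fromBlocks PtA PtAB PtABᵀ PtB).PosSemidef)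
    (hPtA : (PA - PtA).PosSemidef) (hPtB : (PB - PtB).PosSemidef)
    (σtA2 σtB2 γt : ℝ)
    (hσtA : σtA2 = u ⬝ᵥ (PtA *ᵥ u)) (hσtB : σtB2 = u ⬝ᵥ (PtB *ᵥ u))
    (hγt : γt = u ⬝ᵥ (PtAB *ᵥ u))
    (PtF : Matrix (Fin n) (Fin n) ℝ)
    (hPtF : PtF = PtA + (σtA2 + σtB2 - 2 * γt + σm2) • vecMulVec w w
      - vecMulVec ((PtA - PtAB) *ᵥ u) w
      - vecMulVec w (u ᵥ* (PtA - PtABᵀ))) :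
    (PSCI ω - PtF).PosSemidef := by
  rw [← le_iff]
  obtain ⟨hω0, hω1⟩ := hω
  rcases hω0.eq_or_lt with rfl | hω0
  · simpa [hPSCI, hPtF, hw] using le_iff.mpr hPtA
  have hdiag := fromBlocks_zero_zero_le_fromBlocks_zero_zero
    (smul_le_smul_of_nonneg_left (le_iff.mpr hPtA) (inv_nonneg.mpr (sub_nonneg.mpr hω1.le)))
    (smul_le_smul_of_nonneg_left (le_iff.mpr hPtB) (inv_nonneg.mpr hω0.le))
  have hblock_le := (fromBlocks_le_fromBlocks_inv_smul hblock hω0 hω1).trans hdiag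
  calc PtF = fusionGain w u * fromBlocks PtA PtAB PtABᵀ PtB * (fusionGain w u)ᵀ
        + σm2 • vecMulVec w w := by
        rw [fusionGain_mul_fromBlocks_mul_transpose, hPtF, hσtA, hσtB, hγt]
        module
    _ ≤ fusionGain w u * fromBlocks ((1 - ω)⁻¹ • PA) 0 0 (ω⁻¹ • PB) * (fusionGain w u)ᵀ
        + σm2 • vecMulVec w w := by
        rw [le_iff, add_sub_add_right_eq_sub]
        exact mul_mul_transpose_le_mul_mul_transpose hblock_le _
    _ = PSCI ω := by
        rw [hPSCI, hw, fusionGain_mul_fromBlocks_inv_smul_mul_transpose hPAs u hω0 hω1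
          (by rw [hD, hσA, hσB])]

/-- Consistency of the SCI filter: for any admissible joint covariance
`[[P̃_A, P̃_AB],[P̃_ABᵀ, P̃_B]] ⪰ 0` with `P̃_A ⪯ P_A` and `P̃_B ⪯ P_B`, the
fused MSE matrix `P̃_F` (with gain `w = (ω/D(ω)) P_A u`) satisfies
`P̃_F ⪯ P_SCI(ω)` for all `ω ∈ [0,1)`. -/
theorem stmt_17 {n : ℕ} (hn : 1 ≤ n)
    (PA PB : Matrix (Fin n) (Fin n) ℝ)
    (hPA : PA.PosDef) (hPAs : PA.IsSymm) (hPB : PB.PosDef) (hPBs : PB.IsSymm)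
    (u : Fin n → ℝ) (hu : u ⬝ᵥ u = 1)
    (σm2 : ℝ) (hσm : 0 ≤ σm2)
    (σA2 σB2 : ℝ) (hσA : σA2 = u ⬝ᵥ (PA *ᵥ u)) (hσB : σB2 = u ⬝ᵥ (PB *ᵥ u))
    (D : ℝ → ℝ) (hD : ∀ ω, D ω = ω * σA2 + (1 - ω) * (σB2 + ω * σm2))
    (PSCI : ℝ → Matrix (Fin n) (Fin n) ℝ)
    (hPSCI : ∀ ω, PSCI ω =
      (1 / (1 - ω)) • (PA - (ω / D ω) • vecMulVec (PA *ᵥ u) (PA *ᵥ u)))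
    (ω : ℝ) (hω : ω ∈ Set.Ico (0 : ℝ) 1)
    (w : Fin n → ℝ) (hw : w = (ω / D ω) • (PA *ᵥ u))
    (PtA PtB PtAB : Matrix (Fin n) (Fin n) ℝ)
    (hPtAs : PtA.IsSymm) (hPtBs : PtB.IsSymm)
    (hblock : (Matrix.fromBlocks PtA PtAB PtABᵀ PtB).PosSemidef)
    (hPtA : (PA - PtA).PosSemidef) (hPtB : (PB - PtB).PosSemidef)
    (σtA2 σtB2 γt : ℝ)
    (hσtA : σtA2 = u ⬝ᵥ (PtA *ᵥ u)) (hσtB : σtB2 = u ⬝ᵥ (PtB *ᵥ u))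
    (hγt : γt = u ⬝ᵥ (PtAB *ᵥ u))
    (PtF : Matrix (Fin n) (Fin n) ℝ)
    (hPtF : PtF = PtA + (σtA2 + σtB2 - 2 * γt + σm2) • vecMulVec w w
      - vecMulVec ((PtA - PtAB) *ᵥ u) w
      - vecMulVec w (u ᵥ* (PtA - PtABᵀ))) :
    (PSCI ω - PtF).PosSemidef :=
  stmt_17_general PA PB hPAs u σm2 σA2 σB2 hσA hσB D hD PSCI hPSCI ω hω w hw PtA PtB PtAB hblock
    hPtA hPtB σtA2 σtB2 γt hσtA hσtB hγt PtF hPtF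
end

section
/- Let σ_A², σ_B², σ_m² be positive reals and r ∈ (0,1). Define the quadratic polynomials P(ω) = σ_B² + (σ_A² − σ_B² + σ_m²) ω − σ_m² ω² and Q(ω) = P(ω) − r σ_A² ω. Then there exist real numbers a, b, c, d with a < b < 0 < 1 < c < d such that P(b) = P(d) = 0 and Q(a) = Q(c) = 0. -/
/-!
Both `P` and `Q` are concave quadratics with positive values at `0` (namely `σ_B²`) and at `1`
(namely `σ_A²` and `(1 - r) σ_A²`), so each has one root below `0` and one above `1`.
Since `Q ω - P ω = -r σ_A² ω`, the polynomial `Q` is positive at the negative root `b` of `P`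
and negative at its positive root `d`; hence `b` lies strictly between the roots of `Q`,
while `d` lies beyond the larger one.
-/

lemma exists_factorization_of_neg_leadingCoeff {m B C : ℝ} (hm : 0 < m)
    (hdisc : 0 < B ^ 2 + 4 * m * C) :
    ∃ x₁ x₂ : ℝ, x₁ < x₂ ∧ ∀ x, C + B * x - m * x ^ 2 = m * (x - x₁) * (x₂ - x) := by
  set s := Real.sqrt (B ^ 2 + 4 * m * C)
  have hs : 0 < s := Real.sqrt_pos.mpr hdisc
  have hs2 : s ^ 2 = B ^ 2 + 4 * m * C := Real.sq_sqrt hdisc.le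
  refine ⟨(B - s) / (2 * m), (B + s) / (2 * m), by gcongr; linarith, fun x => ?_⟩
  field_simp
  linear_combination -hs2

section FactoredQuadratic

variable {m x₁ x₂ x : ℝ}

lemma mem_Ioo_of_factorization_pos (hm : 0 < m) (h₁₂ : x₁ < x₂)
    (hx : 0 < m * (x - x₁) * (x₂ - x)) : x₁ < x ∧ x < x₂ := by
  have hprod : 0 < (x - x₁) * (x₂ - x) := by
    rw [mul_assoc] at hx
    exact pos_of_mul_pos_right hx hm.le
  constructor <;> by_contra! h <;> nlinarith

lemma lt_or_lt_of_factorization_neg (hm : 0 < m) (hx : m * (x - x₁) * (x₂ - x) < 0) :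
    x < x₁ ∨ x₂ < x := by
  by_contra! h
  nlinarith [mul_nonneg (sub_nonneg.mpr h.1) (sub_nonneg.mpr h.2)]

end FactoredQuadratic

/-- Root interlacing of the quadratics `P(ω) = σ_B² + (σ_A² − σ_B² + σ_m²)ω − σ_m² ω²`
and `Q(ω) = P(ω) − r σ_A² ω`: there exist `a < b < 0 < 1 < c < d` with
`P(b) = P(d) = 0` and `Q(a) = Q(c) = 0`. -/
theorem stmt_18 (σA2 σB2 σm2 r : ℝ)
    (hA : 0 < σA2) (hB : 0 < σB2) (hm : 0 < σm2)
    (hr : r ∈ Set.Ioo (0 : ℝ) 1)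
    (P Q : ℝ → ℝ)
    (hP : ∀ ω, P ω = σB2 + (σA2 - σB2 + σm2) * ω - σm2 * ω ^ 2)
    (hQ : ∀ ω, Q ω = P ω - r * σA2 * ω) :
    ∃ a b c d : ℝ, a < b ∧ b < 0 ∧ (0 : ℝ) < 1 ∧ 1 < c ∧ c < d ∧
      P b = 0 ∧ P d = 0 ∧ Q a = 0 ∧ Q c = 0 := by
  obtain ⟨hr0, hr1⟩ := hr
  have hrA : 0 < r * σA2 := mul_pos hr0 hA
  obtain ⟨b, d, hbd, hPf⟩ := exists_factorization_of_neg_leadingCoeff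
    (B := σA2 - σB2 + σm2) (C := σB2) hm (by positivity)
  obtain ⟨a, c, hac, hQf⟩ := exists_factorization_of_neg_leadingCoeff
    (B := σA2 - σB2 + σm2 - r * σA2) (C := σB2) hm (by positivity)
  replace hPf (ω : ℝ) : P ω = σm2 * (ω - b) * (d - ω) := by rw [hP, hPf]
  replace hQf (ω : ℝ) : Q ω = σm2 * (ω - a) * (c - ω) := by rw [hQ, hP, ← hQf]; ring
  have hP0 := mem_Ioo_of_factorization_pos (x := 0) hm hbd (by rw [← hPf, hP]; simpa)
  have hQ0 := mem_Ioo_of_factorization_pos (x := 0) hm hac (by rw [← hQf, hQ, hP]; simpa)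
  have hQ1 := mem_Ioo_of_factorization_pos (x := 1) hm hac (by rw [← hQf, hQ, hP]; nlinarith)
  have hQb := mem_Ioo_of_factorization_pos (x := b) hm hac
    (by rw [← hQf, hQ, hPf, sub_self, mul_zero, zero_mul, zero_sub]; nlinarith [hP0.1])
  have hQd := lt_or_lt_of_factorization_neg (x := d) hm
    (by rw [← hQf, hQ, hPf, sub_self, mul_zero, zero_sub]; nlinarith [hP0.2])
  refine ⟨a, b, c, d, hQb.1, hP0.1, one_pos, hQ1.2, hQd.resolve_left ?_, ?_, ?_, ?_, ?_⟩
  · linarith [hQ0.1, hP0.2]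
  all_goals simp [hPf, hQf]
end
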